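/- Under the grounded Laplacian setup, fix followers i, j ∈ F and define f(x,y) = 𝟏ᵀ(L_F + x E_ii + y E_jj)^{-1}(b + x e_i + y e_j) for x, y ≥ 0. Then f is monotone nondecreasing in each variable: for all 0 ≤ x₁ ≤ x₂ and y ≥ 0, f(x₁, y) ≤ f(x₂, y). -/

import Mathlib

/-!
The matrices `M(x) = L_F + x Eᵢᵢ + y Eⱼⱼ` (`x, y ≥ 0`) are positive definite Z-matrices, hence
monotone: `0 ≤ M v` forces `0 ≤ v`, as one sees by testing the quadratic form on the negative
part of `v`. Every row sum of `L_F` counts the neighbours outside `F`, so `b ≤ L_F 𝟏`, which gives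
`z(x) = M(x)⁻¹ (b + x eᵢ + y eⱼ) ≤ 𝟏`; then
`M(x₁) (z(x₂) - z(x₁)) = (x₂ - x₁) (1 - z(x₂)ᵢ) eᵢ ≥ 0`, so `z` and with it `f = 𝟏ᵀ z` are
nondecreasing in `x`.
-/

open Matrix Finset

namespace Matrix

variable {m n : Type*}

def IsZMatrix (A : Matrix n n ℝ) : Prop := ∀ p q, p ≠ q → A p q ≤ 0

theorem IsZMatrix.submatrix {A : Matrix m m ℝ} (hA : A.IsZMatrix) {e : n → m}
    (he : Function.Injective e) : (A.submatrix e e).IsZMatrix :=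
  fun _ _ hpq => hA _ _ (he.ne hpq)

theorem IsZMatrix.add {A B : Matrix n n ℝ} (hA : A.IsZMatrix) (hB : B.IsZMatrix) :
    (A + B).IsZMatrix :=
  fun p q hpq => add_nonpos (hA p q hpq) (hB p q hpq)

theorem isZMatrix_smul_vecMulVec_single [DecidableEq n] (i : n) (x : ℝ) :
    (x • vecMulVec (Pi.single i 1) (Pi.single i 1) : Matrix n n ℝ).IsZMatrix := by
  intro p q hpq
  have hoff : (single i i 1 : Matrix n n ℝ) p q = 0 :=
    single_apply_of_ne _ _ _ _ _ fun h => hpq (h.1.symm.trans h.2)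
  simp [← single_eq_single_vecMulVec_single, hoff]

theorem vecMulVec_single_mulVec [Fintype n] [DecidableEq n] (i : n) (v : n → ℝ) :
    vecMulVec (Pi.single i 1) (Pi.single i 1) *ᵥ v = v i • Pi.single i 1 := by
  simp [vecMulVec_mulVec]

theorem PosDef.add_smul_vecMulVec_self [Fintype n] {A : Matrix n n ℝ} (hA : A.PosDef)
    (u : n → ℝ) {x : ℝ} (hx : 0 ≤ x) : (A + x • vecMulVec u u).PosDef :=
  hA.add_posSemidef <| by simpa using (posSemidef_vecMulVec_self_star u).smul hx

theorem PosDef.nonneg_of_mulVec_nonneg [Fintype n] {A : Matrix n n ℝ} (hA : A.PosDef)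
    (hZ : A.IsZMatrix) {v : n → ℝ} (hv : 0 ≤ A *ᵥ v) : 0 ≤ v := by
  have hcross : v⁻ ⬝ᵥ A *ᵥ v⁺ ≤ 0 := by
    rw [dot_mulVec_eq_sum_sum]
    refine Finset.sum_nonpos fun p _ => Finset.sum_nonpos fun q _ => ?_
    change (v q)⁻ * A q p * (v p)⁺ ≤ 0
    obtain rfl | hpq := eq_or_ne p q
    · rcases le_total (v p) 0 with h | h
      · simp [posPart_eq_zero.2 h]
      · simp [negPart_eq_zero.2 h]
    · exact mul_nonpos_of_nonpos_of_nonneg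
        (mul_nonpos_of_nonneg_of_nonpos (negPart_nonneg _) (hZ q p hpq.symm)) (posPart_nonneg _)
  have hneg : v⁻ ⬝ᵥ A *ᵥ v⁻ ≤ 0 := by
    have : 0 ≤ v⁻ ⬝ᵥ A *ᵥ v := dotProduct_nonneg_of_nonneg (negPart_nonneg v) hv
    rw [← posPart_sub_negPart v, mulVec_sub, dotProduct_sub, posPart_sub_negPart] at this
    linarith
  have : v⁻ = 0 := by
    by_contra h
    exact (hA.dotProduct_mulVec_pos h).not_ge (by simpa using hneg)
  rw [← posPart_sub_negPart v, this, sub_zero]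
  exact posPart_nonneg v

theorem PosDef.mulVec_inv_mulVec [Fintype n] [DecidableEq n] {A : Matrix n n ℝ} (hA : A.PosDef)
    (v : n → ℝ) : A *ᵥ (A⁻¹ *ᵥ v) = v := by
  rw [mulVec_mulVec, mul_nonsing_inv _ ((isUnit_iff_isUnit_det _).1 hA.isUnit), one_mulVec]

theorem PosDef.monotoneOn_inv_add_smul_single_mulVec [Fintype n] [DecidableEq n]
    {A : Matrix n n ℝ} (hA : A.PosDef) (hZ : A.IsZMatrix) {c : n → ℝ} (hc : c ≤ A *ᵥ 1) (i : n) :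
    MonotoneOn (fun x : ℝ => (A + x • vecMulVec (Pi.single i 1) (Pi.single i 1))⁻¹ *ᵥ
      (c + x • Pi.single i 1)) (Set.Ici 0) := by
  intro x₁ hx₁ x₂ hx₂ hx
  set e : n → ℝ := Pi.single i 1
  set P : ℝ → Matrix n n ℝ := fun x => A + x • vecMulVec e e with hP
  set z : ℝ → n → ℝ := fun x => (P x)⁻¹ *ᵥ (c + x • e)
  have hPD : ∀ x : ℝ, 0 ≤ x → (P x).PosDef := fun x hx => hA.add_smul_vecMulVec_self e hx
  have hPZ : ∀ x, (P x).IsZMatrix := fun x => hZ.add (isZMatrix_smul_vecMulVec_single i x)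
  have hsolve : ∀ x : ℝ, 0 ≤ x → P x *ᵥ z x = c + x • e := fun x hx =>
    (hPD x hx).mulVec_inv_mulVec _
  have hz₂_le_one : z x₂ ≤ 1 := by
    have : P x₂ *ᵥ (1 - z x₂) = A *ᵥ 1 - c := by
      rw [mulVec_sub, hsolve x₂ hx₂, hP, add_mulVec, smul_mulVec, vecMulVec_single_mulVec]
      simp only [Pi.one_apply, one_smul]
      abel
    exact sub_nonneg.1 <| (hPD x₂ hx₂).nonneg_of_mulVec_nonneg (hPZ x₂)
      (this ▸ sub_nonneg.2 hc)
  have hstep : P x₁ *ᵥ (z x₂ - z x₁) = ((x₂ - x₁) * (1 - z x₂ i)) • e := by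
    have hP₁ : P x₁ = P x₂ - (x₂ - x₁) • vecMulVec e e := by
      simp only [hP, sub_smul]; abel
    rw [mulVec_sub, hsolve x₁ hx₁, hP₁, sub_mulVec, hsolve x₂ hx₂, smul_mulVec,
      vecMulVec_single_mulVec]
    ext k
    simp only [Pi.sub_apply, Pi.add_apply, Pi.smul_apply, smul_eq_mul]
    ring
  refine sub_nonneg.1 <| (hPD x₁ hx₁).nonneg_of_mulVec_nonneg (hPZ x₁) ?_
  rw [hstep]
  exact smul_nonneg (mul_nonneg (sub_nonneg.2 hx) (sub_nonneg.2 (hz₂_le_one i)))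
    (Pi.single_nonneg.2 zero_le_one)

end Matrix

namespace SimpleGraph

variable {V : Type*} [Fintype V] [DecidableEq V] (G : SimpleGraph V) [DecidableRel G.Adj]

theorem lapMatrix_apply_of_ne {R : Type*} [AddGroupWithOne R] {v w : V} (h : v ≠ w) :
    G.lapMatrix R v w = -G.adjMatrix R v w := by
  rw [lapMatrix, degMatrix, Matrix.sub_apply, diagonal_apply_ne _ h, zero_sub]

theorem isZMatrix_lapMatrix : (G.lapMatrix ℝ).IsZMatrix := fun v w h => by
  rw [lapMatrix_apply_of_ne G h, adjMatrix_apply, neg_nonpos]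
  split_ifs <;> norm_num

theorem card_filter_adj_le_sum_lapMatrix {F T : Finset V} (hFT : Disjoint F T) {v : V}
    (hv : v ∈ F) : ((T.filter fun a => G.Adj a v).card : ℝ) ≤ ∑ w ∈ F, G.lapMatrix ℝ v w := by
  have hrow : ∑ w, G.lapMatrix ℝ v w = 0 := by
    simpa [mulVec, dotProduct] using congrFun (G.lapMatrix_mulVec_const_eq_zero (R := ℝ)) v
  have hout : ∑ w ∈ Fᶜ, G.lapMatrix ℝ v w = -∑ w ∈ Fᶜ, G.adjMatrix ℝ v w := by
    rw [← sum_neg_distrib]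
    exact sum_congr rfl fun w hw =>
      G.lapMatrix_apply_of_ne (ne_of_mem_of_not_mem hv (mem_compl.1 hw))
  have hT : ((T.filter fun a => G.Adj a v).card : ℝ) = ∑ w ∈ T, G.adjMatrix ℝ v w := by
    simp only [adjMatrix_apply, sum_boole, G.adj_comm v]
  have hTF : ∑ w ∈ T, G.adjMatrix ℝ v w ≤ ∑ w ∈ Fᶜ, G.adjMatrix ℝ v w :=
    sum_le_sum_of_subset_of_nonneg (subset_compl_iff_disjoint_left.2 hFT) fun w _ _ => by
      rw [adjMatrix_apply]; split_ifs <;> norm_num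
  linarith [sum_add_sum_compl F (G.lapMatrix ℝ v)]

end SimpleGraph

theorem stmt7_general {V : Type} [Fintype V] [DecidableEq V]
    (G : SimpleGraph V) [DecidableRel G.Adj]
    (F S1 : Finset V)
    (hFS1 : Disjoint F S1)
    (LF : Matrix F F ℝ)
    (hLF : LF = (G.lapMatrix ℝ).submatrix (fun i : F => (i : V)) (fun i : F => (i : V)))
    (hPD : LF.PosDef)
    (b : F → ℝ)
    (hb : ∀ i : F, b i = ((S1.filter fun a => G.Adj a (i : V)).card : ℝ))
    (i j : F)
    (f : ℝ → ℝ → ℝ)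
    (hf : ∀ x y : ℝ, f x y = (1 : F → ℝ) ⬝ᵥ
        ((LF + x • vecMulVec (Pi.single i 1) (Pi.single i 1)
            + y • vecMulVec (Pi.single j 1) (Pi.single j 1))⁻¹
          *ᵥ (b + x • (Pi.single i 1 : F → ℝ) + y • (Pi.single j 1 : F → ℝ))))
    (x₁ x₂ y : ℝ) (hx₁ : 0 ≤ x₁) (hx : x₁ ≤ x₂) (hy : 0 ≤ y) :
    f x₁ y ≤ f x₂ y := by
  have hZ : LF.IsZMatrix := hLF ▸ G.isZMatrix_lapMatrix.submatrix Subtype.val_injective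
  have hb_le : b ≤ LF *ᵥ 1 := fun k => by
    rw [hb k, hLF]
    simpa [mulVec, dotProduct, sum_attach F fun w => G.lapMatrix ℝ k w]
      using G.card_filter_adj_le_sum_lapMatrix hFS1 k.2
  set Ejj : Matrix F F ℝ := vecMulVec (Pi.single j 1) (Pi.single j 1)
  have hc : b + y • Pi.single j 1 ≤ (LF + y • Ejj) *ᵥ 1 := by
    rw [add_mulVec, smul_mulVec, vecMulVec_single_mulVec, Pi.one_apply, one_smul]
    exact add_le_add_left hb_le _
  have hmono := (hPD.add_smul_vecMulVec_self _ hy).monotoneOn_inv_add_smul_single_mulVec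
    (hZ.add (isZMatrix_smul_vecMulVec_single j y)) hc i hx₁ (hx₁.trans hx) hx
  simp only [add_right_comm _ (y • _)] at hmono
  rw [hf, hf]
  exact dotProduct_le_dotProduct_of_nonneg_left hmono zero_le_one

/-- Under the grounded Laplacian setup, fixing followers `i, j ∈ F` and defining
`f(x,y) = 𝟏ᵀ(L_F + x E_ii + y E_jj)⁻¹(b + x eᵢ + y eⱼ)` for `x, y ≥ 0`, one has
`f` is monotone nondecreasing in each variable: for all `0 ≤ x₁ ≤ x₂` and `y ≥ 0`,
`f(x₁, y) ≤ f(x₂, y)`. -/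
theorem stmt7 {V : Type} [Fintype V] [DecidableEq V]
    (G : SimpleGraph V) [DecidableRel G.Adj] (hconn : G.Connected)
    (F S0 S1 : Finset V)
    (hFne : F.Nonempty) (hS1ne : S1.Nonempty)
    (hFS0 : Disjoint F S0) (hFS1 : Disjoint F S1) (hS0S1 : Disjoint S0 S1)
    (hcover : F ∪ S0 ∪ S1 = Finset.univ)
    (LF : Matrix F F ℝ)
    (hLF : LF = (G.lapMatrix ℝ).submatrix (fun i : F => (i : V)) (fun i : F => (i : V)))
    (hPD : LF.PosDef) (hnn : ∀ i j : F, 0 ≤ LF⁻¹ i j)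
    (b : F → ℝ)
    (hb : ∀ i : F, b i = ((S1.filter fun a => G.Adj a (i : V)).card : ℝ))
    (i j : F)
    (f : ℝ → ℝ → ℝ)
    (hf : ∀ x y : ℝ, f x y = (1 : F → ℝ) ⬝ᵥ
        ((LF + x • vecMulVec (Pi.single i 1) (Pi.single i 1)
            + y • vecMulVec (Pi.single j 1) (Pi.single j 1))⁻¹
          *ᵥ (b + x • (Pi.single i 1 : F → ℝ) + y • (Pi.single j 1 : F → ℝ))))
    (x₁ x₂ y : ℝ) (hx₁ : 0 ≤ x₁) (hx : x₁ ≤ x₂) (hy : 0 ≤ y) :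
    f x₁ y ≤ f x₂ y :=
  stmt7_general G F S1 hFS1 LF hLF hPD b hb i j f hf x₁ x₂ y hx₁ hx hy
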